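/- (Normal form) Every graph extension grammar Γ = (g, 𝒜) can be transformed into an equivalent graph extension grammar Γ' = (g', 𝒜') with L(Γ') = L(Γ) such that the co-domain type s of every extension and union operation in 𝒜' satisfies |s| ≥ 1, i.e., no extension or union operation produces graphs of type 0. -/

import Mathlib

structure GEGraph (ν Ld Lb : Type) where
  V : Set ν
  E : Set (ν × Lb × ν)
  lab : ν → Ld
  port : List ν

def GEGraph.IsEmptyGraph {ν Ld Lb : Type} (G : GEGraph ν Ld Lb) : Prop :=
  G.V = ∅ ∧ G.E = ∅ ∧ G.port = []

def CloneWitness {ν Ld Lb : Type} (G : GEGraph ν Ld Lb) (C : Set ν) (Cv : ν → Set ν)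
    (G' : GEGraph ν Ld Lb) : Prop :=
  (∀ v, v ∈ G.V → v ∉ C → Cv v = {v}) ∧
  (∀ u v, u ∈ G.V → v ∈ G.V → u ≠ v → Disjoint (Cv u) (Cv v)) ∧
  G'.V = (⋃ v ∈ G.V, Cv v) ∧
  G'.E = {e | ∃ u ℓ w, (u, ℓ, w) ∈ G.E ∧ e.1 ∈ Cv u ∧ e.2.1 = ℓ ∧ e.2.2 ∈ Cv w} ∧
  (∀ v, v ∈ G.V → ∀ v' ∈ Cv v, G'.lab v' = G.lab v) ∧
  G'.port = G.port

def Clone {ν Ld Lb : Type} (G : GEGraph ν Ld Lb) (C : Set ν) : Set (GEGraph ν Ld Lb) :=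
  {G' | ∃ Cv, CloneWitness G C Cv G'}

structure ExpOp (ν Ld Lb : Type) where
  V : Set ν
  E : Set (ν × Lb × ν)
  lab : ν → Ld
  port : List ν
  dock : List ν
  C : Set ν
  E_sub : ∀ e ∈ E, e.1 ∈ V ∧ e.2.2 ∈ V
  port_nodup : port.Nodup
  dock_nodup : dock.Nodup
  port_sub : ∀ v ∈ port, v ∈ V
  dock_sub : ∀ v ∈ dock, v ∈ V
  C_sub : C ⊆ V \ ({v | v ∈ port} ∪ {v | v ∈ dock})

namespace ExpOp
variable {ν Ld Lb : Type}

def und (Φ : ExpOp ν Ld Lb) : GEGraph ν Ld Lb := ⟨Φ.V, Φ.E, Φ.lab, Φ.port⟩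

def NEW (Φ : ExpOp ν Ld Lb) : Set ν := {v | v ∈ Φ.port} \ {v | v ∈ Φ.dock}

def CONT (Φ : ExpOp ν Ld Lb) : Set ν := Φ.V \ ({v | v ∈ Φ.port} ∪ {v | v ∈ Φ.dock})

/-- (R1): every edge source lies in NEW. -/
def R1 (Φ : ExpOp ν Ld Lb) : Prop := ∀ e ∈ Φ.E, e.1 ∈ Φ.NEW

/-- (R2): every dock node that is not a port is the target of some edge. -/
def R2 (Φ : ExpOp ν Ld Lb) : Prop := ∀ v ∈ Φ.dock, v ∉ Φ.port → ∃ e ∈ Φ.E, e.2.2 = v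

/-- (R3): no isolated context nodes. -/
def R3 (Φ : ExpOp ν Ld Lb) : Prop := ∀ v ∈ Φ.V, v ∉ Φ.port → ∃ e ∈ Φ.E, e.2.2 = v

end ExpOp

def Apply {ν Ld Lb : Type} (Φ : ExpOp ν Ld Lb) (G H : GEGraph ν Ld Lb) : Prop :=
  G.port.length = Φ.dock.length ∧
  ∃ (Cv : ν → Set ν) (G'' : GEGraph ν Ld Lb) (μ : ν → ν),
    CloneWitness Φ.und Φ.C Cv G'' ∧
    Set.InjOn μ G''.V ∧
    (∀ v ∈ Φ.NEW, μ v ∉ G.V) ∧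
    Φ.dock.map μ = G.port ∧
    (∀ v ∈ Φ.CONT, ∀ v' ∈ Cv v, μ v' ∈ G.V ∧ μ v' ∉ {x | x ∈ G.port} ∧
      G.lab (μ v') = Φ.lab v) ∧
    H.V = G.V ∪ μ '' G''.V ∧
    H.E = G.E ∪ {e | ∃ e' ∈ G''.E, e = (μ e'.1, e'.2.1, μ e'.2.2)} ∧
    (∀ v ∈ G.V, H.lab v = G.lab v) ∧
    (∀ v' ∈ G''.V, μ v' ∉ G.V → H.lab (μ v') = G''.lab v') ∧
    H.port = G''.port.map μ

def UnionOf {ν Ld Lb : Type} (G₁ G₂ H : GEGraph ν Ld Lb) : Prop :=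
  Disjoint G₁.V G₂.V ∧
  H.V = G₁.V ∪ G₂.V ∧
  H.E = G₁.E ∪ G₂.E ∧
  (∀ v ∈ G₁.V, H.lab v = G₁.lab v) ∧
  (∀ v ∈ G₂.V, H.lab v = G₂.lab v) ∧
  H.port = G₁.port ++ G₂.port

/-- A graph extension grammar: a regular tree grammar whose symbols are interpreted as the
constant `φ`, extension operations (satisfying (R1) and (R2)), and union operations, with
nonterminals typed by natural numbers (the number of ports). -/
structure GEG (ν Ld Lb NT : Type) where
  typeOf : NT → ℕ
  S : NT
  prodPhi : NT → Prop
  prodExt : NT → ExpOp ν Ld Lb → NT → Prop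
  prodUnion : NT → NT → NT → Prop
  phi_type : ∀ A, prodPhi A → typeOf A = 0
  ext_type : ∀ A Φ B, prodExt A Φ B →
    typeOf A = Φ.port.length ∧ typeOf B = Φ.dock.length ∧ Φ.R1 ∧ Φ.R2
  union_type : ∀ A B C, prodUnion A B C → typeOf A = typeOf B + typeOf C

/-- `Γ.Derives A G` holds iff `G ∈ val_𝒜(L_A(g))`, i.e. some tree derivable from `A`
evaluates (nondeterministically) to `G`. -/
inductive GEG.Derives {ν Ld Lb NT : Type} (Γ : GEG ν Ld Lb NT) :
    NT → GEGraph ν Ld Lb → Prop where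
  | phi {A : NT} {G : GEGraph ν Ld Lb} : Γ.prodPhi A → G.IsEmptyGraph → Γ.Derives A G
  | ext {A : NT} {Φ : ExpOp ν Ld Lb} {B : NT} {G H : GEGraph ν Ld Lb} :
      Γ.prodExt A Φ B → Γ.Derives B G → Apply Φ G H → Γ.Derives A H
  | union {A B C : NT} {G₁ G₂ H : GEGraph ν Ld Lb} :
      Γ.prodUnion A B C → Γ.Derives B G₁ → Γ.Derives C G₂ → UnionOf G₁ G₂ H →
      Γ.Derives A H

/-
A nonterminal of type 0 can only derive the empty graph: an extension operation with no ports has no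
new nodes, hence no edges by (R1), hence no docks by (R2), so all its nodes are context nodes, which
must be matched in the (inductively empty) argument graph. Moreover a nonterminal that derives one
empty graph derives all of them, since the empty graphs differ only in their irrelevant labelling.
So every extension or union production with a type-0 left-hand side can be replaced by a
`φ`-production for that nonterminal, provided it derives anything at all.
-/

variable {ν Ld Lb NT : Type}

namespace ExpOp

lemma E_eq_empty_of_port_eq_nil {Φ : ExpOp ν Ld Lb} (hR1 : Φ.R1) (hp : Φ.port = []) :
    Φ.E = ∅ :=
  Set.eq_empty_of_forall_notMem fun e he => by simpa [hp] using (hR1 e he).1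

lemma dock_eq_nil_of_port_eq_nil {Φ : ExpOp ν Ld Lb} (hR1 : Φ.R1) (hR2 : Φ.R2)
    (hp : Φ.port = []) : Φ.dock = [] := by
  rw [List.eq_nil_iff_forall_not_mem]
  intro v hv
  obtain ⟨e, he, -⟩ := hR2 v hv (by simp [hp])
  simp [E_eq_empty_of_port_eq_nil hR1 hp] at he

end ExpOp

lemma UnionOf.isEmptyGraph {G₁ G₂ H : GEGraph ν Ld Lb} (h : UnionOf G₁ G₂ H)
    (h₁ : G₁.IsEmptyGraph) (h₂ : G₂.IsEmptyGraph) : H.IsEmptyGraph := by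
  obtain ⟨-, hV, hE, -, -, hp⟩ := h
  exact ⟨by simp [hV, h₁.1, h₂.1], by simp [hE, h₁.2.1, h₂.2.1], by simp [hp, h₁.2.2, h₂.2.2]⟩

lemma UnionOf.of_isEmptyGraph {G₁ G₂ H H' : GEGraph ν Ld Lb} (h : UnionOf G₁ G₂ H)
    (hH : H.IsEmptyGraph) (hH' : H'.IsEmptyGraph) : UnionOf G₁ G₂ H' := by
  obtain ⟨hdisj, hV, hE, -, -, hp⟩ := h
  have h₁ : G₁.V = ∅ := Set.subset_empty_iff.mp (hH.1 ▸ hV ▸ Set.subset_union_left)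
  have h₂ : G₂.V = ∅ := Set.subset_empty_iff.mp (hH.1 ▸ hV ▸ Set.subset_union_right)
  exact ⟨hdisj, hH'.1.trans (hV ▸ hH.1).symm, hH'.2.1.trans (hE ▸ hH.2.1).symm,
    by simp [h₁], by simp [h₂], hH'.2.2.trans (hp ▸ hH.2.2).symm⟩

lemma Apply.isEmptyGraph {Φ : ExpOp ν Ld Lb} {G H : GEGraph ν Ld Lb} (h : Apply Φ G H)
    (hp : Φ.port = []) (hd : Φ.dock = []) (hG : G.IsEmptyGraph) : H.IsEmptyGraph := by
  obtain ⟨-, Cv, G'', μ, ⟨-, -, hV'', hE'', -, hport''⟩, -, -, -, hcont, hV, hE, -, -, hHp⟩ := h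
  have hclone : ∀ v ∈ Φ.V, Cv v = ∅ := fun v hv =>
    Set.eq_empty_of_forall_notMem fun v' hv' => by
      simpa [hG.1] using (hcont v ⟨hv, by simp [hp, hd]⟩ v' hv').1
  have hV''_empty : G''.V = ∅ := by
    simpa [hV'', ExpOp.und] using hclone
  have hE''_empty : G''.E = ∅ := by
    refine Set.eq_empty_of_forall_notMem fun e he => ?_
    obtain ⟨u, ℓ, w, hu, he1, -⟩ := hE'' ▸ he
    simp [hclone u (Φ.E_sub _ hu).1] at he1
  exact ⟨by simp [hV, hG.1, hV''_empty], by simp [hE, hG.2.1, hE''_empty],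
    by simp [hHp, hport'', ExpOp.und, hp]⟩

lemma Apply.of_isEmptyGraph {Φ : ExpOp ν Ld Lb} {G H H' : GEGraph ν Ld Lb} (h : Apply Φ G H)
    (hH : H.IsEmptyGraph) (hH' : H'.IsEmptyGraph) : Apply Φ G H' := by
  obtain ⟨hlen, Cv, G'', μ, hcw, hinj, hnew, hdock, hcont, hV, hE, -, -, hp⟩ := h
  have hGV : G.V = ∅ := Set.subset_empty_iff.mp (hH.1 ▸ hV ▸ Set.subset_union_left)
  have hV'' : G''.V = ∅ :=
    Set.image_eq_empty.mp (Set.subset_empty_iff.mp (hH.1 ▸ hV ▸ Set.subset_union_right))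
  exact ⟨hlen, Cv, G'', μ, hcw, hinj, hnew, hdock, hcont, hH'.1.trans (hV ▸ hH.1).symm,
    hH'.2.1.trans (hE ▸ hH.2.1).symm, by simp [hGV], by simp [hV''],
    hH'.2.2.trans (hp ▸ hH.2.2).symm⟩

namespace GEG

variable {Γ : GEG ν Ld Lb NT}

lemma Derives.isEmptyGraph_of_typeOf_eq_zero {A : NT} {G : GEGraph ν Ld Lb}
    (h : Γ.Derives A G) (hA : Γ.typeOf A = 0) : G.IsEmptyGraph := by
  induction h with
  | phi _ hG => exact hG
  | @ext A Φ B G H hprod _ happ ih =>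
    obtain ⟨hAΦ, hBΦ, hR1, hR2⟩ := Γ.ext_type A Φ B hprod
    have hp : Φ.port = [] := List.length_eq_zero_iff.mp (hAΦ ▸ hA)
    have hd : Φ.dock = [] := ExpOp.dock_eq_nil_of_port_eq_nil hR1 hR2 hp
    exact happ.isEmptyGraph hp hd (ih (by simp [hBΦ, hd]))
  | @union A B C _ _ _ hprod _ _ hu ih₁ ih₂ =>
    have hBC := Γ.union_type A B C hprod
    exact hu.isEmptyGraph (ih₁ (by omega)) (ih₂ (by omega))

lemma Derives.of_isEmptyGraph {A : NT} {G G' : GEGraph ν Ld Lb} (h : Γ.Derives A G)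
    (hG : G.IsEmptyGraph) (hG' : G'.IsEmptyGraph) : Γ.Derives A G' := by
  induction h generalizing G' with
  | phi hprod _ => exact .phi hprod hG'
  | ext hprod hder happ _ => exact .ext hprod hder (happ.of_isEmptyGraph hG hG')
  | union hprod hd₁ hd₂ hu _ _ => exact .union hprod hd₁ hd₂ (hu.of_isEmptyGraph hG hG')

def normalForm (Γ : GEG ν Ld Lb NT) : GEG ν Ld Lb NT where
  typeOf := Γ.typeOf
  S := Γ.S
  prodPhi A := Γ.typeOf A = 0 ∧ ∃ G, Γ.Derives A G
  prodExt A Φ B := Γ.prodExt A Φ B ∧ 1 ≤ Φ.port.length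
  prodUnion A B C := Γ.prodUnion A B C ∧ 1 ≤ Γ.typeOf A
  phi_type _ h := h.1
  ext_type A Φ B h := Γ.ext_type A Φ B h.1
  union_type A B C h := Γ.union_type A B C h.1

lemma Derives.of_normalForm {A : NT} {G : GEGraph ν Ld Lb} (h : Γ.normalForm.Derives A G) :
    Γ.Derives A G := by
  induction h with
  | phi hprod hG =>
    obtain ⟨hA, G₀, h₀⟩ := hprod
    exact h₀.of_isEmptyGraph (h₀.isEmptyGraph_of_typeOf_eq_zero hA) hG
  | ext hprod _ happ ih => exact .ext hprod.1 ih happ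
  | union hprod _ _ hu ih₁ ih₂ => exact .union hprod.1 ih₁ ih₂ hu

lemma Derives.normalForm_of_typeOf_eq_zero {A : NT} {G : GEGraph ν Ld Lb} (h : Γ.Derives A G)
    (hA : Γ.typeOf A = 0) : Γ.normalForm.Derives A G :=
  .phi ⟨hA, G, h⟩ (h.isEmptyGraph_of_typeOf_eq_zero hA)

lemma Derives.normalForm {A : NT} {G : GEGraph ν Ld Lb} (h : Γ.Derives A G) :
    Γ.normalForm.Derives A G := by
  induction h with
  | @phi A G hprod hG => exact .phi ⟨Γ.phi_type A hprod, G, .phi hprod hG⟩ hG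
  | @ext A Φ B G H hprod hder happ ih =>
    by_cases hΦ : 1 ≤ Φ.port.length
    · exact .ext (Γ := Γ.normalForm) ⟨hprod, hΦ⟩ ih happ
    · exact (Derives.ext hprod hder happ).normalForm_of_typeOf_eq_zero
        (by have := (Γ.ext_type A Φ B hprod).1; omega)
  | @union A B C G₁ G₂ H hprod hd₁ hd₂ hu ih₁ ih₂ =>
    by_cases hA : 1 ≤ Γ.typeOf A
    · exact .union (Γ := Γ.normalForm) ⟨hprod, hA⟩ ih₁ ih₂ hu
    · exact (Derives.union hprod hd₁ hd₂ hu).normalForm_of_typeOf_eq_zero (by omega)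

end GEG

/-- normal form: every graph extension grammar can be transformed into an
equivalent one in which the co-domain type of every extension and union operation is at
least 1. -/
theorem normal_form {ν Ld Lb NT : Type} (Γ : GEG ν Ld Lb NT) :
    ∃ Γ' : GEG ν Ld Lb NT,
      (∀ G, Γ'.Derives Γ'.S G ↔ Γ.Derives Γ.S G) ∧
      (∀ A Φ B, Γ'.prodExt A Φ B → 1 ≤ Φ.port.length) ∧
      (∀ A B C, Γ'.prodUnion A B C → 1 ≤ Γ'.typeOf A) :=
  ⟨Γ.normalForm, fun _ => ⟨GEG.Derives.of_normalForm, GEG.Derives.normalForm⟩,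
    fun _ _ _ h => h.2, fun _ _ _ h => h.2⟩
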